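/- arXiv:2509.24013 — 2 statements merged into one kernel-verified Lean document; each statement's English description precedes it below -/
import Mathlib

section
/- Let G be a finite simple graph with α(G) ≥ 2. For i ∈ [α(G)] let a_i = w(i,G), and for j ∈ {2, …, α(G)} let d_j = ⌈(a_j − j·a_1)/(j−1)⌉. If N ≥ max{1, d_2, …, d_{α(G)}}, then ω(K_N ∨ G) = ρ(K_N ∨ G). -/
open Classical Finset

variable {V : Type*}

/-- Independence number of the subgraph of `G` induced on `D`. -/
noncomputable def indepNumOn (G : SimpleGraph V) [Fintype V] (D : Finset V) : ℕ :=
  (D.powerset.filter (fun s => ∀ x ∈ s, ∀ y ∈ s, x ≠ y → ¬ G.Adj x y)).sup Finset.card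

noncomputable def indepNum (G : SimpleGraph V) [Fintype V] : ℕ := indepNumOn G Finset.univ

noncomputable def cliqueNum (G : SimpleGraph V) [Fintype V] : ℕ :=
  (Finset.univ.powerset.filter
    (fun s : Finset V => ∀ x ∈ s, ∀ y ∈ s, x ≠ y → G.Adj x y)).sup Finset.card

/-- Hall ratio of `G`: max over nonempty (induced) subgraphs of |V(H)|/α(H). -/
noncomputable def hallRatio (G : SimpleGraph V) [Fintype V] : ℚ :=
  if h : (Finset.univ.powerset.filter (fun s : Finset V => s.Nonempty)).Nonempty then
    (Finset.univ.powerset.filter (fun s : Finset V => s.Nonempty)).sup' h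
      (fun D => (D.card : ℚ) / (indepNumOn G D : ℚ))
  else 0

/-- `wfun G a` : order of the largest induced subgraph of `G` with independence number `a`. -/
noncomputable def wfun (G : SimpleGraph V) [Fintype V] (a : ℕ) : ℕ :=
  (Finset.univ.powerset.filter (fun s : Finset V => indepNumOn G s = a)).sup Finset.card

/-- Join of two vertex-disjoint graphs. -/
def joinG {α β : Type*} (G : SimpleGraph α) (H : SimpleGraph β) : SimpleGraph (α ⊕ β) where
  Adj x y :=
    match x, y with
    | Sum.inl a, Sum.inl b => G.Adj a b
    | Sum.inr a, Sum.inr b => H.Adj a b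
    | Sum.inl _, Sum.inr _ => True
    | Sum.inr _, Sum.inl _ => True
  symm := by
    refine ⟨?_⟩
    rintro (a | a) (b | b) h <;> try trivial
    · exact h.symm
    · exact h.symm
  loopless := by
    refine ⟨?_⟩
    rintro (a | a) h
    · exact G.irrefl h
    · exact H.irrefl h

/-- `G` is `f`-choosable. -/
def Choosable (G : SimpleGraph V) (f : V → ℕ) : Prop :=
  ∀ L : V → Finset ℕ, (∀ v, (L v).card = f v) →
    ∃ c : V → ℕ, (∀ v, c v ∈ L v) ∧ ∀ u v, G.Adj u v → c u ≠ c v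

/-- List chromatic number. -/
noncomputable def listChromNum (G : SimpleGraph V) : ℕ :=
  sInf {k | Choosable G (fun _ => k)}

/-- Chromatic number (as a natural number). -/
noncomputable def chromNum (G : SimpleGraph V) : ℕ :=
  sInf {n | G.Colorable n}

/-- `G` is `(k, ε)`-flexible: for every `k`-assignment `L` and every request `r`
with nonempty domain `D`, some proper `L`-coloring satisfies at least `ε|D|` requests. -/
def FlexSat (G : SimpleGraph V) (k : ℕ) (ε : ℚ) : Prop :=
  ∀ L : V → Finset ℕ, (∀ v, (L v).card = k) →
    ∀ D : Finset V, D.Nonempty → ∀ r : V → ℕ, (∀ v ∈ D, r v ∈ L v) →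
      ∃ c : V → ℕ, (∀ v, c v ∈ L v) ∧ (∀ u v, G.Adj u v → c u ≠ c v) ∧
        ε * (D.card : ℚ) ≤ ((D.filter (fun v => c v = r v)).card : ℚ)

/-- List flexibility number. -/
noncomputable def listFlexNum (G : SimpleGraph V) [Fintype V] : ℕ :=
  sInf {k | FlexSat G k (1 / hallRatio G)}

/-! In `K_N ∨ G` every clique is a clique of `K_N` plus one of `G`, so `ω = N + ω(G)`, and
`ω ≤ ρ` holds in any graph. Conversely, let `D` meet `G` in a set of independence number `j`.
Then `|D| ≤ N + w(j, G)` and `α(D) ≥ max(1, j)`. For `j ≤ 1` the `G`-part of `D` is a clique,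
so `|D| ≤ N + ω(G)`; for `j ≥ 2` the bound `N ≥ d_j` rearranges to
`N + w(j, G) ≤ j (N + w(1, G)) ≤ α(D) (N + ω(G))`. Hence `ρ ≤ N + ω(G)`. -/

section

variable {α β : Type*} [Fintype V]

lemma card_le_indepNumOn (G : SimpleGraph V) {D s : Finset V} (hsD : s ⊆ D)
    (hs : G.IsIndepSet (s : Set V)) : s.card ≤ indepNumOn G D :=
  le_sup (f := Finset.card) (mem_filter.mpr ⟨mem_powerset.mpr hsD, fun _ hx _ hy ↦ hs hx hy⟩)

lemma indepNumOn_mono (G : SimpleGraph V) {D E : Finset V} (h : D ⊆ E) :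
    indepNumOn G D ≤ indepNumOn G E :=
  Finset.sup_le fun _ hs ↦ card_le_indepNumOn G ((mem_powerset.mp (mem_filter.mp hs).1).trans h)
    fun _ hx _ hy ↦ (mem_filter.mp hs).2 _ hx _ hy

lemma one_le_indepNumOn (G : SimpleGraph V) {D : Finset V} (hD : D.Nonempty) :
    1 ≤ indepNumOn G D := by
  obtain ⟨v, hv⟩ := hD
  simpa using card_le_indepNumOn G (singleton_subset_iff.mpr hv) (by simp)

lemma isClique_of_indepNumOn_le_one (G : SimpleGraph V) {K : Finset V}
    (h : indepNumOn G K ≤ 1) : G.IsClique (K : Set V) := by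
  intro x hx y hy hxy
  by_contra hadj
  have hpair : G.IsIndepSet (({x, y} : Finset V) : Set V) := by
    rw [coe_pair, SimpleGraph.IsIndepSet, Set.pairwise_pair]
    exact fun _ ↦ ⟨hadj, fun h ↦ hadj h.symm⟩
  have := card_le_indepNumOn G (insert_subset_iff.mpr ⟨hx, singleton_subset_iff.mpr hy⟩) hpair
  rw [card_pair hxy] at this
  omega

lemma indepNumOn_le_one_of_isClique (G : SimpleGraph V) {K : Finset V}
    (h : G.IsClique (K : Set V)) : indepNumOn G K ≤ 1 := by
  refine Finset.sup_le fun s hs ↦ ?_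
  obtain ⟨hsK, hind⟩ := mem_filter.mp hs
  by_contra! hlt
  obtain ⟨x, hx, y, hy, hxy⟩ := one_lt_card.mp hlt
  exact hind x hx y hy hxy (h (mem_powerset.mp hsK hx) (mem_powerset.mp hsK hy) hxy)

lemma card_le_cliqueNum (G : SimpleGraph V) {s : Finset V} (hs : G.IsClique (s : Set V)) :
    s.card ≤ cliqueNum G :=
  le_sup (f := Finset.card) (mem_filter.mpr ⟨mem_powerset.mpr (subset_univ s),
    fun _ hx _ hy ↦ hs hx hy⟩)

lemma exists_isClique_card_eq_cliqueNum (G : SimpleGraph V) :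
    ∃ s : Finset V, G.IsClique (s : Set V) ∧ s.card = cliqueNum G := by
  obtain ⟨s, hs, hcard⟩ := exists_mem_eq_sup
    (univ.powerset.filter (fun s : Finset V => ∀ x ∈ s, ∀ y ∈ s, x ≠ y → G.Adj x y))
    ⟨∅, by simp⟩ Finset.card
  exact ⟨s, fun _ hx _ hy ↦ (mem_filter.mp hs).2 _ hx _ hy, hcard.symm⟩

lemma cliqueNum_top [Fintype α] : cliqueNum (⊤ : SimpleGraph α) = Fintype.card α :=
  le_antisymm (Finset.sup_le fun s _ ↦ card_le_univ s)
    (card_le_cliqueNum ⊤ (s := univ) (fun _ _ _ _ h ↦ h))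

lemma card_le_wfun (G : SimpleGraph V) (D : Finset V) : D.card ≤ wfun G (indepNumOn G D) :=
  le_sup (f := Finset.card) (by simp)

lemma wfun_le_cliqueNum (G : SimpleGraph V) {j : ℕ} (hj : j ≤ 1) : wfun G j ≤ cliqueNum G :=
  Finset.sup_le fun _ hs ↦
    card_le_cliqueNum G (isClique_of_indepNumOn_le_one G ((mem_filter.mp hs).2.trans_le hj))

lemma hallRatio_nonneg (G : SimpleGraph V) : 0 ≤ hallRatio G := by
  unfold hallRatio
  split_ifs with h
  · obtain ⟨D, hD⟩ := h
    exact (by positivity : (0 : ℚ) ≤ _).trans (le_sup' _ hD)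
  · rfl

lemma div_indepNumOn_le_hallRatio (G : SimpleGraph V) {D : Finset V} (hD : D.Nonempty) :
    (D.card : ℚ) / indepNumOn G D ≤ hallRatio G := by
  have hmem : D ∈ univ.powerset.filter (fun s : Finset V ↦ s.Nonempty) := by simpa using hD
  rw [hallRatio, dif_pos ⟨D, hmem⟩]
  exact le_sup' (fun D ↦ (D.card : ℚ) / indepNumOn G D) hmem

lemma hallRatio_le_of_card_le (G : SimpleGraph V) {c : ℚ} (hc : 0 ≤ c)
    (h : ∀ D : Finset V, D.Nonempty → (D.card : ℚ) ≤ c * indepNumOn G D) :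
    hallRatio G ≤ c := by
  unfold hallRatio
  split_ifs
  · refine sup'_le _ _ fun D hD ↦ ?_
    have hD : D.Nonempty := (mem_filter.mp hD).2
    have hα : (0 : ℚ) < indepNumOn G D := by exact_mod_cast one_le_indepNumOn G hD
    exact (div_le_iff₀ hα).mpr (h D hD)
  · exact hc

lemma cliqueNum_le_hallRatio (G : SimpleGraph V) : (cliqueNum G : ℚ) ≤ hallRatio G := by
  obtain ⟨S, hS, hcard⟩ := exists_isClique_card_eq_cliqueNum G
  rcases S.eq_empty_or_nonempty with rfl | hne
  · simpa [← hcard] using hallRatio_nonneg G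
  · have hα : indepNumOn G S = 1 :=
      le_antisymm (indepNumOn_le_one_of_isClique G hS) (one_le_indepNumOn G hne)
    simpa [hα, hcard] using div_indepNumOn_le_hallRatio G hne

lemma isClique_joinG_disjSum (H : SimpleGraph α) (G : SimpleGraph β) {s : Finset α}
    {t : Finset β} (hs : H.IsClique (s : Set α)) (ht : G.IsClique (t : Set β)) :
    (joinG H G).IsClique (s.disjSum t : Set (α ⊕ β)) := by
  rintro (a | a) ha (b | b) hb hab
  · exact hs (by simpa using ha) (by simpa using hb) (fun h ↦ hab (congrArg Sum.inl h))
  · trivial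
  · trivial
  · exact ht (by simpa using ha) (by simpa using hb) (fun h ↦ hab (congrArg Sum.inr h))

lemma cliqueNum_add_le_cliqueNum_joinG [Fintype α] [Fintype β] (H : SimpleGraph α)
    (G : SimpleGraph β) : cliqueNum H + cliqueNum G ≤ cliqueNum (joinG H G) := by
  obtain ⟨s, hs, hscard⟩ := exists_isClique_card_eq_cliqueNum H
  obtain ⟨t, ht, htcard⟩ := exists_isClique_card_eq_cliqueNum G
  rw [← hscard, ← htcard, ← card_disjSum]
  exact card_le_cliqueNum _ (isClique_joinG_disjSum H G hs ht)

lemma indepNumOn_toRight_le_indepNumOn_joinG [Fintype α] [Fintype β] (H : SimpleGraph α)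
    (G : SimpleGraph β) (D : Finset (α ⊕ β)) :
    indepNumOn G D.toRight ≤ indepNumOn (joinG H G) D := by
  refine Finset.sup_le fun s hs ↦ ?_
  obtain ⟨hsD, hind⟩ := mem_filter.mp hs
  rw [← card_map .inr]
  refine card_le_indepNumOn _ (map_inr_subset_iff_subset_toRight.mpr (mem_powerset.mp hsD)) ?_
  rintro _ hx _ hy hxy
  obtain ⟨a, ha, rfl⟩ := mem_map.mp hx
  obtain ⟨b, hb, rfl⟩ := mem_map.mp hy
  exact hind a ha b hb (fun h ↦ hxy (congrArg Sum.inr h))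

lemma card_le_card_add_wfun [Fintype α] (G : SimpleGraph V) (D : Finset (α ⊕ V)) :
    D.card ≤ Fintype.card α + wfun G (indepNumOn G D.toRight) := by
  rw [← card_toLeft_add_card_toRight]
  exact add_le_add (card_le_univ _) (card_le_wfun G _)

end

lemma add_le_mul_add_of_ceil_div_le {a b : ℚ} {j N : ℕ} (hj : 2 ≤ j)
    (h : ⌈(a - j * b) / (j - 1)⌉ ≤ (N : ℤ)) : N + a ≤ j * (N + b) := by
  have hj1 : (0 : ℚ) < j - 1 := by
    have : (2 : ℚ) ≤ j := by exact_mod_cast hj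
    linarith
  have := (div_le_iff₀ hj1).mp (Int.ceil_le.mp h)
  push_cast at this
  linarith

lemma card_le_mul_indepNumOn_joinG_top [Fintype V] (G : SimpleGraph V) (N : ℕ)
    (hNd : ∀ j ∈ Finset.Icc 2 (indepNum G),
      ⌈((wfun G j : ℚ) - (j : ℚ) * (wfun G 1 : ℚ)) / ((j : ℚ) - 1)⌉ ≤ (N : ℤ))
    {D : Finset (Fin N ⊕ V)} (hD : D.Nonempty) :
    (D.card : ℚ) ≤ (N + cliqueNum G : ℕ) * indepNumOn (joinG (⊤ : SimpleGraph (Fin N)) G) D := by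
  set J := joinG (⊤ : SimpleGraph (Fin N)) G
  set j := indepNumOn G D.toRight
  have hjα : j ≤ indepNumOn J D := indepNumOn_toRight_le_indepNumOn_joinG ⊤ G D
  have hα := one_le_indepNumOn J hD
  have hcard : (D.card : ℚ) ≤ N + wfun G j := by
    exact_mod_cast (Fintype.card_fin N ▸ card_le_card_add_wfun G D)
  rcases Nat.lt_or_ge j 2 with hj | hj
  · have hw : wfun G j ≤ cliqueNum G := wfun_le_cliqueNum G (Nat.le_of_lt_succ hj)
    calc (D.card : ℚ) ≤ (N + cliqueNum G : ℕ) := hcard.trans (by exact_mod_cast Nat.add_le_add_left hw N)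
      _ ≤ _ := le_mul_of_one_le_right (by positivity) (by exact_mod_cast hα)
  · have hjmax : j ≤ indepNum G := indepNumOn_mono G (subset_univ _)
    have hw : wfun G 1 ≤ cliqueNum G := wfun_le_cliqueNum G le_rfl
    calc (D.card : ℚ) ≤ N + wfun G j := hcard
      _ ≤ j * (N + wfun G 1) := add_le_mul_add_of_ceil_div_le hj (hNd j (mem_Icc.mpr ⟨hj, hjmax⟩))
      _ ≤ indepNumOn J D * (N + cliqueNum G) := by gcongr
      _ = _ := by push_cast; ring

theorem stmt_6_general {V : Type*} [Fintype V] (G : SimpleGraph V) (N : ℕ)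
    (hNd : ∀ j ∈ Finset.Icc 2 (indepNum G),
      ⌈((wfun G j : ℚ) - (j : ℚ) * (wfun G 1 : ℚ)) / ((j : ℚ) - 1)⌉ ≤ (N : ℤ)) :
    (cliqueNum (joinG (⊤ : SimpleGraph (Fin N)) G) : ℚ)
      = hallRatio (joinG (⊤ : SimpleGraph (Fin N)) G) := by
  set J := joinG (⊤ : SimpleGraph (Fin N)) G
  have hω : N + cliqueNum G ≤ cliqueNum J := by
    simpa [cliqueNum_top] using cliqueNum_add_le_cliqueNum_joinG (⊤ : SimpleGraph (Fin N)) G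
  refine le_antisymm (cliqueNum_le_hallRatio J) ?_
  calc hallRatio J ≤ (N + cliqueNum G : ℕ) :=
        hallRatio_le_of_card_le _ (by positivity)
          fun _ hD ↦ card_le_mul_indepNumOn_joinG_top G N hNd hD
    _ ≤ _ := by exact_mod_cast hω

/-- if N ≥ max{1, d_2, …, d_{α(G)}} then ω(K_N ∨ G) = ρ(K_N ∨ G). -/
theorem stmt_6 {V : Type*} [Fintype V] (G : SimpleGraph V)
    (h2 : 2 ≤ indepNum G) (N : ℕ) (hN1 : 1 ≤ (N : ℤ))
    (hNd : ∀ j ∈ Finset.Icc 2 (indepNum G),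
      ⌈((wfun G j : ℚ) - (j : ℚ) * (wfun G 1 : ℚ)) / ((j : ℚ) - 1)⌉ ≤ (N : ℤ)) :
    (cliqueNum (joinG (⊤ : SimpleGraph (Fin N)) G) : ℚ)
      = hallRatio (joinG (⊤ : SimpleGraph (Fin N)) G) :=
  stmt_6_general G N hNd
end

section
/- If G is a finite simple graph with χ_ℓ(G) = χ(G), then χ_ℓ(K_1 ∨ G) = χ(K_1 ∨ G); that is, the cone over a chromatic-choosable graph is chromatic-choosable. -/
/-
Adding a universal vertex raises the chromatic number by exactly one, and raises the choice
number by at most one: colour the apex with any colour `a` of its list, delete `a` from the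
other lists and list-colour `G` from what remains. Hence
`χ_ℓ(K₁ ∨ G) ≤ χ_ℓ(G) + 1 = χ(G) + 1 ≤ χ(K₁ ∨ G) ≤ χ_ℓ(K₁ ∨ G)`.
-/

open Classical Finset

variable {V : Type*}

abbrev cone (G : SimpleGraph V) : SimpleGraph (Fin 1 ⊕ V) :=
  joinG (⊤ : SimpleGraph (Fin 1)) G

section

variable (G : SimpleGraph V)

theorem choosable_card [Fintype V] : Choosable G (fun _ => Fintype.card V) := by
  intro L hL
  obtain ⟨c, hc_inj, hc_mem⟩ :=
    (Finset.all_card_le_biUnion_card_iff_exists_injective L).mp fun s => by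
      rcases s.eq_empty_or_nonempty with rfl | ⟨v, hv⟩
      · simp
      · calc #s ≤ Fintype.card V := card_le_univ s
          _ = #(L v) := (hL v).symm
          _ ≤ #(s.biUnion L) := card_le_card (subset_biUnion_of_mem L hv)
  exact ⟨c, hc_mem, fun u v huv => hc_inj.ne (G.ne_of_adj huv)⟩

theorem choosable_listChromNum [Fintype V] : Choosable G (fun _ => listChromNum G) :=
  Nat.sInf_mem (s := {k | Choosable G fun _ => k}) ⟨_, choosable_card G⟩

variable {G}

theorem Choosable.colorable {k : ℕ} (h : Choosable G (fun _ => k)) : G.Colorable k := by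
  obtain ⟨c, hc_mem, hc_proper⟩ := h (fun _ => range k) (fun _ => card_range k)
  exact ⟨SimpleGraph.Coloring.mk (fun v => ⟨c v, mem_range.mp (hc_mem v)⟩)
    fun huv => by simpa [Fin.ext_iff] using hc_proper _ _ huv⟩

theorem chromNum_le_listChromNum [Fintype V] : chromNum G ≤ listChromNum G :=
  Nat.sInf_le (choosable_listChromNum G).colorable

theorem Choosable.cone {k : ℕ} (h : Choosable G (fun _ => k)) :
    Choosable (cone G) (fun _ => k + 1) := by
  intro L hL
  obtain ⟨a, ha⟩ : (L (.inl 0)).Nonempty := by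
    rw [← card_pos, hL]
    exact k.succ_pos
  have h_erase : ∀ v : V, ∃ t ⊆ (L (.inr v)).erase a, #t = k := fun v =>
    exists_subset_card_eq <| by
      have h_card : #(L (.inr v)) = k + 1 := hL (.inr v)
      rw [card_erase_eq_ite]
      split_ifs <;> omega
  choose T hT_sub hT_card using h_erase
  obtain ⟨c, hc_mem, hc_proper⟩ := h T hT_card
  have hc_erase : ∀ v, c v ∈ (L (.inr v)).erase a := fun v => hT_sub v (hc_mem v)
  refine ⟨Sum.elim (fun _ => a) c, ?_, ?_⟩
  · rintro (i | v)
    · rwa [Subsingleton.elim i 0]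
    · exact mem_of_mem_erase (hc_erase v)
  · rintro (i | u) (j | v) huv
    · exact absurd (congrArg Sum.inl (Subsingleton.elim i j)) huv.ne
    · exact (ne_of_mem_erase (hc_erase v)).symm
    · exact ne_of_mem_erase (hc_erase u)
    · exact hc_proper u v huv

theorem SimpleGraph.Colorable.of_cone {n : ℕ} (h : (cone G).Colorable (n + 1)) : G.Colorable n := by
  obtain ⟨C⟩ := h
  have h_apex : ∀ v, C (.inr v) ≠ C (.inl 0) := fun _ =>
    C.valid (show (cone G).Adj _ _ from trivial)
  have hG : G.Colorable (Fintype.card {x // x ≠ C (.inl 0)}) :=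
    (SimpleGraph.Coloring.mk (fun v => ⟨C (.inr v), h_apex v⟩) fun huv e =>
      C.valid (show (cone G).Adj (.inr _) (.inr _) from huv) (congrArg Subtype.val e)).colorable
  simpa [Fintype.card_subtype_compl] using hG

theorem chromNum_add_one_le_chromNum_cone [Fintype V] :
    chromNum G + 1 ≤ chromNum (cone G) := by
  have h_col : (cone G).Colorable (chromNum (cone G)) :=
    Nat.sInf_mem (s := {n | (cone G).Colorable n}) ⟨_, SimpleGraph.colorable_of_fintype _⟩
  obtain ⟨n, hn⟩ : ∃ n, chromNum (cone G) = n + 1 :=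
    Nat.exists_eq_succ_of_ne_zero fun h0 => by
      rw [h0] at h_col
      exact (h_col.some (.inl 0)).elim0
  rw [hn] at h_col ⊢
  exact Nat.succ_le_succ (Nat.sInf_le h_col.of_cone)

end

/-- the cone of a chromatic-choosable graph is chromatic-choosable. -/
theorem stmt_8 {V : Type*} [Fintype V] (G : SimpleGraph V)
    (h : listChromNum G = chromNum G) :
    listChromNum (joinG (⊤ : SimpleGraph (Fin 1)) G)
      = chromNum (joinG (⊤ : SimpleGraph (Fin 1)) G) := by
  change listChromNum (cone G) = chromNum (cone G)
  have h_list : listChromNum (cone G) ≤ listChromNum G + 1 :=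
    Nat.sInf_le (choosable_listChromNum G).cone
  have h_chrom := chromNum_add_one_le_chromNum_cone (G := G)
  have h_le := chromNum_le_listChromNum (G := cone G)
  omega
end
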